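/- For an NMVM random variable S, the tail variance TV_α(S) = E[(S − CTE_α(S))² | S > s_α] equals c*(1−α*)/(1−α) · σ² (1 + (s_α − μ) h_{S*}(s_α)) + c**(1−α**)/(1−α) · γ (γ + σ² h_{S**}(s_α)) − [c*(1−α*)/(1−α) · (γ + σ² h_{S*}(s_α))]², where c* = E[Θ], c** = E[Θ²], S* and S** are the NMVM variables with mixing densities θπ(θ)/c* and θ²π(θ)/c** respectively, α^{*(l)} = 1 − F̄_{S^{*(l)}}(s_α), and h denotes the hazard function. -/

import Mathlib

open MeasureTheory Set

/-- Density of the normal distribution with mean `m` and variance `v`. -/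
noncomputable def ndens (m v x : ℝ) : ℝ :=
  (Real.sqrt (2 * Real.pi * v))⁻¹ * Real.exp (-(x - m) ^ 2 / (2 * v))

/-- Density of the univariate NMVM distribution with parameters `μ, γ, σ` and
mixing density `q` on `(0, ∞)`. -/
noncomputable def mixdens (μ γ σ : ℝ) (q : ℝ → ℝ) (s : ℝ) : ℝ :=
  ∫ θ in Set.Ioi (0:ℝ), ndens (μ + θ * γ) (θ * σ ^ 2) s * q θ

/-- Survival function of the univariate NMVM distribution. -/
noncomputable def surv (μ γ σ : ℝ) (q : ℝ → ℝ) (c : ℝ) : ℝ :=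
  ∫ s in Set.Ioi c, mixdens μ γ σ q s

/-- `k`-th tail moment `E[S^k | S > c]` of the univariate NMVM distribution. -/
noncomputable def tailmom (μ γ σ : ℝ) (q : ℝ → ℝ) (k : ℕ) (c : ℝ) : ℝ :=
  (surv μ γ σ q c)⁻¹ * ∫ s in Set.Ioi c, s ^ k * mixdens μ γ σ q s

/-!
Conditionally on `Θ = θ`, `S` is normal with mean `μ + θγ` and variance `θσ²`. Gaussian
integration by parts gives the truncated moments `∫_{s > c} sᵏ φ_θ(s) ds`, `k = 1, 2`, as
combinations of the Gaussian tail and the Gaussian density at `c` whose coefficients are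
polynomials of degree at most two in `θ`. Integrating against `π` (Fubini, justified by
`E[Θ²] < ∞`) turns `θ π(θ)` and `θ² π(θ)` into `c* π*` and `c** π**`, so the truncated moments
of `S` are expressed through the tails and densities of `S`, `S*`, `S**` at `s_α`. The tail
variance is `E[S² | S > s_α] - CTE_α(S)²`, and the rest is algebra.
-/

open Filter ProbabilityTheory

lemma abs_le_one_add_sq (s : ℝ) : |s| ≤ 1 + s ^ 2 := by
  nlinarith [sq_abs s, sq_nonneg (|s| - 1)]

lemma setIntegral_Ioi_eq_neg_of_hasDerivAt {f f' : ℝ → ℝ} {c : ℝ}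
    (hderiv : ∀ x, HasDerivAt f (f' x) x) (hf : IntegrableOn f (Ioi c))
    (hf' : IntegrableOn f' (Ioi c)) : ∫ x in Ioi c, f' x = -f c := by
  simpa using integral_Ioi_of_hasDerivAt_of_tendsto' (fun x _ => hderiv x) hf'
    (tendsto_zero_of_hasDerivAt_of_integrableOn_Ioi (fun x _ => hderiv x) hf' hf)

lemma integral_sub_sq_mul {ν : Measure ℝ} {f : ℝ → ℝ} (h₀ : Integrable f ν)
    (h₁ : Integrable (fun s => s * f s) ν) (h₂ : Integrable (fun s => s ^ 2 * f s) ν) (C : ℝ) :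
    ∫ s, (s - C) ^ 2 * f s ∂ν
      = ∫ s, s ^ 2 * f s ∂ν - 2 * C * ∫ s, s * f s ∂ν + C ^ 2 * ∫ s, f s ∂ν := by
  have hsplit : ∀ s, (s - C) ^ 2 * f s = s ^ 2 * f s - 2 * C * (s * f s) + C ^ 2 * f s :=
    fun s => by ring
  simp_rw [hsplit]
  rw [integral_add (f := fun s => s ^ 2 * f s - 2 * C * (s * f s)) (h₂.sub (h₁.const_mul _))
      (h₀.const_mul _), integral_sub h₂ (h₁.const_mul _),
    integral_const_mul, integral_const_mul]

section NormalDensity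

variable {v : ℝ}

lemma ndens_eq_gaussianPDFReal (hv : 0 ≤ v) (m : ℝ) :
    ndens m v = gaussianPDFReal m v.toNNReal := by
  ext x
  simp [ndens, gaussianPDFReal, Real.coe_toNNReal _ hv]

lemma ndens_nonneg (m v x : ℝ) : 0 ≤ ndens m v x := by
  unfold ndens; positivity

lemma ndens_le (hv : 0 ≤ v) (m x : ℝ) : ndens m v x ≤ (Real.sqrt (2 * Real.pi * v))⁻¹ :=
  mul_le_of_le_one_right (by positivity) <| Real.exp_le_one_iff.2 <|
    div_nonpos_of_nonpos_of_nonneg (neg_nonpos.2 (sq_nonneg _)) (by positivity)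

lemma measurable_ndens_mixture (μ γ σ : ℝ) :
    Measurable fun z : ℝ × ℝ => ndens (μ + z.1 * γ) (z.1 * σ ^ 2) z.2 := by
  unfold ndens; fun_prop

lemma integrable_pow_mul_ndens (hv : 0 < v) (m : ℝ) (k : ℕ) :
    Integrable fun x => x ^ k * ndens m v x := by
  have hv' : v.toNNReal ≠ 0 := by simpa using hv
  have h := (memLp_id_gaussianReal (μ := m) (v := v.toNNReal) k).integrable_norm_pow'
  rw [gaussianReal_of_var_ne_zero _ hv', integrable_withDensity_iff_integrable_smul'
    (measurable_gaussianPDF _ _) (ae_of_all _ fun _ => gaussianPDF_lt_top)] at h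
  rw [ndens_eq_gaussianPDFReal hv.le]
  refine h.congr' (by fun_prop) (ae_of_all _ fun x => ?_)
  simp [toReal_gaussianPDF, abs_of_nonneg (gaussianPDFReal_nonneg _ _ _), mul_comm]

lemma integral_ndens (hv : 0 < v) (m : ℝ) : ∫ x, ndens m v x = 1 := by
  rw [ndens_eq_gaussianPDFReal hv.le]
  exact integral_gaussianPDFReal_eq_one m (by simpa using hv)

lemma integral_sq_mul_ndens (hv : 0 < v) (m : ℝ) : ∫ x, x ^ 2 * ndens m v x = m ^ 2 + v := by
  have hv' : v.toNNReal ≠ 0 := by simpa using hv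
  have h := variance_eq_sub (memLp_id_gaussianReal (μ := m) (v := v.toNNReal) 2)
  simp only [variance_id_gaussianReal, integral_id_gaussianReal, id] at h
  rw [integral_gaussianReal_eq_integral_smul hv'] at h
  rw [ndens_eq_gaussianPDFReal hv.le]
  simp only [Pi.pow_apply, id, smul_eq_mul, Real.coe_toNNReal _ hv.le] at h
  simp_rw [mul_comm (_ ^ 2)]
  linarith

lemma integrable_mul_ndens_of_abs_le {g : ℝ → ℝ} {a b m : ℝ} (hv : 0 < v) (hg : Measurable g)
    (hgb : ∀ s, |g s| ≤ a + b * s ^ 2) : Integrable fun s => g s * ndens m v s := by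
  have hbound : Integrable fun s => a * ndens m v s + b * (s ^ 2 * ndens m v s) :=
    ((integrable_pow_mul_ndens hv m 0).const_mul a).add
      ((integrable_pow_mul_ndens hv m 2).const_mul b) |>.congr (ae_of_all _ fun s => by simp)
  refine hbound.mono' (hg.aestronglyMeasurable.mul (by unfold ndens; fun_prop))
    (ae_of_all _ fun s => ?_)
  rw [norm_mul, Real.norm_eq_abs, Real.norm_of_nonneg (ndens_nonneg m v s)]
  nlinarith [hgb s, ndens_nonneg m v s]

lemma integral_abs_mul_ndens_le {g : ℝ → ℝ} {a b m : ℝ} (hv : 0 < v) (hg : Measurable g)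
    (hgb : ∀ s, |g s| ≤ a + b * s ^ 2) :
    ∫ s, |g s| * ndens m v s ≤ a + b * (m ^ 2 + v) := by
  have h0 := integrable_pow_mul_ndens hv m 0
  have h2 := integrable_pow_mul_ndens hv m 2
  simp only [pow_zero, one_mul] at h0
  calc ∫ s, |g s| * ndens m v s ≤ ∫ s, a * ndens m v s + b * (s ^ 2 * ndens m v s) :=
        integral_mono (integrable_mul_ndens_of_abs_le hv hg.abs (by simpa using hgb))
          ((h0.const_mul a).add (h2.const_mul b))
          fun s => by nlinarith [hgb s, ndens_nonneg m v s]
    _ = a + b * (m ^ 2 + v) := by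
        rw [integral_add (h0.const_mul a) (h2.const_mul b), integral_const_mul, integral_const_mul,
          integral_ndens hv, integral_sq_mul_ndens hv, mul_one]

lemma hasDerivAt_ndens (m v x : ℝ) : HasDerivAt (ndens m v) ((m - x) / v * ndens m v x) x := by
  have h : HasDerivAt (fun y => -(y - m) ^ 2 / (2 * v)) (-(2 * (x - m)) / (2 * v)) x := by
    simpa using (((hasDerivAt_id x).sub_const m).pow 2).neg.div_const (2 * v)
  refine (h.exp.const_mul (Real.sqrt (2 * Real.pi * v))⁻¹).congr_deriv ?_
  unfold ndens
  rcases eq_or_ne v 0 with rfl | hv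
  · simp
  · field_simp
    ring

lemma setIntegral_Ioi_mul_ndens (hv : 0 < v) (m c : ℝ) :
    ∫ x in Ioi c, x * ndens m v x = m * (∫ x in Ioi c, ndens m v x) + v * ndens m v c := by
  have h0 : Integrable (ndens m v) := by simpa using integrable_pow_mul_ndens hv m 0
  have h1 : Integrable fun x => x * ndens m v x := by simpa using integrable_pow_mul_ndens hv m 1
  have hd : Integrable fun x => (m - x) / v * ndens m v x :=
    ((h0.const_mul m).sub h1).div_const v
      |>.congr (ae_of_all _ fun x => by simp only [Pi.sub_apply]; ring)
  have hibp := setIntegral_Ioi_eq_neg_of_hasDerivAt (c := c) (hasDerivAt_ndens m v)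
    h0.integrableOn hd.integrableOn
  have hsplit : ∀ x, x * ndens m v x = m * ndens m v x - v * ((m - x) / v * ndens m v x) := by
    intro x; field_simp; ring
  simp_rw [hsplit]
  rw [integral_sub (h0.integrableOn.const_mul m) (hd.integrableOn.const_mul v), integral_const_mul,
    integral_const_mul, hibp]
  ring

lemma setIntegral_Ioi_sq_mul_ndens (hv : 0 < v) (m c : ℝ) :
    ∫ x in Ioi c, x ^ 2 * ndens m v x
      = (m ^ 2 + v) * (∫ x in Ioi c, ndens m v x) + (m + c) * v * ndens m v c := by
  have h0 : Integrable (ndens m v) := by simpa using integrable_pow_mul_ndens hv m 0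
  have h1 : Integrable fun x => x * ndens m v x := by simpa using integrable_pow_mul_ndens hv m 1
  have h2 := integrable_pow_mul_ndens hv m 2
  have hd : Integrable fun x => ndens m v x + x * ((m - x) / v * ndens m v x) :=
    (h0.add (((h1.const_mul m).sub h2).div_const v)).congr
      (ae_of_all _ fun x => by simp only [Pi.add_apply, Pi.sub_apply]; ring)
  have hibp := setIntegral_Ioi_eq_neg_of_hasDerivAt (c := c)
    (fun x => (hasDerivAt_id x).mul (hasDerivAt_ndens m v x)) h1.integrableOn
    (by simpa using hd.integrableOn)
  simp only [Pi.mul_apply, id, one_mul] at hibp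
  have hsplit : ∀ x, x ^ 2 * ndens m v x
      = m * (x * ndens m v x) + v * ndens m v x
        - v * (ndens m v x + x * ((m - x) / v * ndens m v x)) := by
    intro x; field_simp; ring
  simp_rw [hsplit]
  rw [integral_sub, integral_add, integral_const_mul, integral_const_mul, integral_const_mul, hibp,
    setIntegral_Ioi_mul_ndens hv]
  · ring
  exacts [h1.integrableOn.const_mul m, h0.integrableOn.const_mul v,
    (h1.integrableOn.const_mul m).add (h0.integrableOn.const_mul v), hd.integrableOn.const_mul v]

end NormalDensity

noncomputable def jointDens (μ γ σ : ℝ) (q : ℝ → ℝ) (z : ℝ × ℝ) : ℝ :=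
  ndens (μ + z.1 * γ) (z.1 * σ ^ 2) z.2 * q z.1

section Mixture

variable {μ γ σ : ℝ} {g q : ℝ → ℝ} {a b : ℝ} {A : Set ℝ}

lemma mixdens_div_const (c s : ℝ) :
    mixdens μ γ σ (fun θ => q θ / c) s = mixdens μ γ σ q s / c := by
  simp only [mixdens, mul_div_assoc', integral_div]

lemma surv_div_const (c x : ℝ) :
    surv μ γ σ (fun θ => q θ / c) x = surv μ γ σ q x / c := by
  simp only [surv, mixdens_div_const, integral_div]

/-- With `φ_θ = ndens (μ + θ * γ) (θ * σ ^ 2)`, the weight in `hq` is `∫ (a + b s²) φ_θ(s) ds`,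
which dominates `∫ |g| φ_θ`: this is Tonelli's condition for the product. -/
lemma integrable_mul_jointDens (hσ : 0 < σ) (hg : Measurable g)
    (hgb : ∀ s, |g s| ≤ a + b * s ^ 2) (hqm : AEStronglyMeasurable q (volume.restrict (Ioi 0)))
    (hq : IntegrableOn (fun θ => (a + b * ((μ + θ * γ) ^ 2 + θ * σ ^ 2)) * q θ) (Ioi 0)) :
    Integrable (fun z => g z.2 * jointDens μ γ σ q z)
      ((volume.restrict (Ioi 0)).prod (volume.restrict A)) := by
  have hmeas : AEStronglyMeasurable (fun z => g z.2 * jointDens μ γ σ q z)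
      ((volume.restrict (Ioi 0)).prod (volume.restrict A)) :=
    (hg.comp measurable_snd).aestronglyMeasurable.mul
      ((measurable_ndens_mixture μ γ σ).aestronglyMeasurable.mul hqm.comp_fst)
  rw [integrable_prod_iff hmeas]
  constructor
  · filter_upwards [ae_restrict_mem measurableSet_Ioi] with θ (hθ : 0 < θ)
    have hv : 0 < θ * σ ^ 2 := by positivity
    exact ((integrable_mul_ndens_of_abs_le (m := μ + θ * γ) hv hg hgb).mul_const (q θ)).restrict
      |>.congr (ae_of_all _ fun s => mul_assoc _ _ _)
  · refine hq.norm.mono' hmeas.norm.integral_prod_right' ?_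
    filter_upwards [ae_restrict_mem measurableSet_Ioi] with θ (hθ : 0 < θ)
    have hv : 0 < θ * σ ^ 2 := by positivity
    simp only [jointDens, norm_mul, Real.norm_eq_abs, abs_of_nonneg (ndens_nonneg _ _ _)]
    calc |∫ s in A, |g s| * (ndens (μ + θ * γ) (θ * σ ^ 2) s * |q θ|)|
        = (∫ s in A, |g s| * ndens (μ + θ * γ) (θ * σ ^ 2) s) * |q θ| := by
          simp only [← mul_assoc, integral_mul_const]
          exact abs_of_nonneg (mul_nonneg (setIntegral_nonneg_of_ae (ae_of_all _ fun s =>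
            mul_nonneg (abs_nonneg _) (ndens_nonneg _ _ _))) (abs_nonneg _))
      _ ≤ (∫ s, |g s| * ndens (μ + θ * γ) (θ * σ ^ 2) s) * |q θ| := by
          refine mul_le_mul_of_nonneg_right (setIntegral_le_integral ?_ ?_) (abs_nonneg _)
          · exact integrable_mul_ndens_of_abs_le hv hg.abs (by simpa using hgb)
          · exact ae_of_all _ fun s => mul_nonneg (abs_nonneg _) (ndens_nonneg _ _ _)
      _ ≤ |a + b * ((μ + θ * γ) ^ 2 + θ * σ ^ 2)| * |q θ| := by
          gcongr
          exact (integral_abs_mul_ndens_le hv hg hgb).trans (le_abs_self _)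

lemma integrableOn_mul_mixdens_of_integrable_prod
    (h : Integrable (fun z => g z.2 * jointDens μ γ σ q z)
      ((volume.restrict (Ioi 0)).prod (volume.restrict A))) :
    IntegrableOn (fun s => g s * mixdens μ γ σ q s) A := by
  have h₁ := h.integral_prod_right
  simp only [integral_const_mul] at h₁
  exact h₁

lemma integrableOn_setIntegral_mul_ndens_mul_of_integrable_prod
    (h : Integrable (fun z => g z.2 * jointDens μ γ σ q z)
      ((volume.restrict (Ioi 0)).prod (volume.restrict A))) :
    IntegrableOn (fun θ => (∫ s in A, g s * ndens (μ + θ * γ) (θ * σ ^ 2) s) * q θ) (Ioi 0) := by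
  have h₁ := h.integral_prod_left
  simp only [jointDens, ← mul_assoc, integral_mul_const] at h₁
  exact h₁

lemma setIntegral_mul_mixdens_of_integrable_prod
    (h : Integrable (fun z => g z.2 * jointDens μ γ σ q z)
      ((volume.restrict (Ioi 0)).prod (volume.restrict A))) :
    ∫ s in A, g s * mixdens μ γ σ q s
      = ∫ θ in Ioi 0, (∫ s in A, g s * ndens (μ + θ * γ) (θ * σ ^ 2) s) * q θ := by
  have h₁ := integral_prod_symm _ h
  rw [integral_prod _ h] at h₁
  simp only [jointDens, integral_const_mul] at h₁
  simp only [← mul_assoc, integral_mul_const] at h₁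
  exact h₁.symm

lemma integrable_jointDens (hσ : 0 < σ) (hq : IntegrableOn q (Ioi 0)) :
    Integrable (jointDens μ γ σ q) ((volume.restrict (Ioi 0)).prod (volume.restrict A)) := by
  simpa using integrable_mul_jointDens (g := fun _ => 1) (a := 1) (b := 0) hσ measurable_const
    (by simp) hq.aestronglyMeasurable (by simpa using hq)

lemma integrable_mul_jointDens_of_le_one_add_sq (hσ : 0 < σ) (hg : Measurable g)
    (hgb : ∀ s, |g s| ≤ 1 + s ^ 2) (hq₀ : IntegrableOn q (Ioi 0))
    (hq₁ : IntegrableOn (fun θ => θ * q θ) (Ioi 0))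
    (hq₂ : IntegrableOn (fun θ => θ ^ 2 * q θ) (Ioi 0)) :
    Integrable (fun z => g z.2 * jointDens μ γ σ q z)
      ((volume.restrict (Ioi 0)).prod (volume.restrict A)) := by
  refine integrable_mul_jointDens (a := 1) (b := 1) hσ hg (by simpa using hgb)
    hq₀.aestronglyMeasurable ?_
  refine (((hq₀.const_mul (1 + μ ^ 2)).add (hq₁.const_mul (2 * μ * γ + σ ^ 2))).add
    (hq₂.const_mul (γ ^ 2))).congr (ae_of_all _ fun θ => ?_)
  simp only [Pi.add_apply]
  ring

lemma surv_eq_setIntegral_tail_mul (hσ : 0 < σ) (hq : IntegrableOn q (Ioi 0)) (c : ℝ) :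
    surv μ γ σ q c = ∫ θ in Ioi 0, (∫ s in Ioi c, ndens (μ + θ * γ) (θ * σ ^ 2) s) * q θ := by
  have h := setIntegral_mul_mixdens_of_integrable_prod (μ := μ) (γ := γ) (g := fun _ => 1)
    (by simpa using integrable_jointDens hσ hq (A := Ioi c))
  simp only [one_mul] at h
  exact h

lemma integrableOn_tail_mul (hσ : 0 < σ) (hq : IntegrableOn q (Ioi 0)) (c : ℝ) :
    IntegrableOn (fun θ => (∫ s in Ioi c, ndens (μ + θ * γ) (θ * σ ^ 2) s) * q θ) (Ioi 0) := by
  simpa using integrableOn_setIntegral_mul_ndens_mul_of_integrable_prod (g := fun _ => 1)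
    (by simpa using integrable_jointDens hσ hq (A := Ioi c))

lemma integrableOn_ndens_mul_mul (hσ : 0 < σ) {w : ℝ → ℝ} (hw : IntegrableOn w (Ioi 0))
    (hw₁ : IntegrableOn (fun θ => θ * w θ) (Ioi 0)) (x : ℝ) :
    IntegrableOn (fun θ => ndens (μ + θ * γ) (θ * σ ^ 2) x * (θ * w θ)) (Ioi 0) := by
  set C := (Real.sqrt (2 * Real.pi * σ ^ 2))⁻¹
  have hmeas : Measurable fun θ => ndens (μ + θ * γ) (θ * σ ^ 2) x :=
    (measurable_ndens_mixture μ γ σ).comp (measurable_id.prodMk measurable_const)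
  refine ((hw.norm.add hw₁.norm).const_mul C).mono' (hmeas.aestronglyMeasurable.mul
    hw₁.aestronglyMeasurable) ?_
  filter_upwards [ae_restrict_mem measurableSet_Ioi] with θ (hθ : 0 < θ)
  have hsqrt : θ * ndens (μ + θ * γ) (θ * σ ^ 2) x ≤ C * (1 + θ) := by
    have h := ndens_le (by positivity : 0 ≤ θ * σ ^ 2) (μ + θ * γ) x
    rw [show 2 * Real.pi * (θ * σ ^ 2) = 2 * Real.pi * σ ^ 2 * θ by ring,
      Real.sqrt_mul (by positivity), mul_inv] at h
    calc θ * ndens (μ + θ * γ) (θ * σ ^ 2) x ≤ θ * (C * (Real.sqrt θ)⁻¹) := by gcongr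
      _ = C * (θ / Real.sqrt θ) := by ring
      _ = C * Real.sqrt θ := by rw [Real.div_sqrt]
      _ ≤ C * (1 + θ) := by
        gcongr
        nlinarith [Real.sq_sqrt hθ.le, Real.sqrt_nonneg θ, sq_nonneg (Real.sqrt θ - 1)]
  simp only [norm_mul, Real.norm_eq_abs, abs_of_nonneg (ndens_nonneg _ _ _), abs_of_pos hθ,
    Pi.add_apply]
  nlinarith [abs_nonneg (w θ), ndens_nonneg (μ + θ * γ) (θ * σ ^ 2) x]

lemma integrableOn_pow_mul_mixdens (hσ : 0 < σ)
    (hq₀ : IntegrableOn q (Ioi 0)) (hq₁ : IntegrableOn (fun θ => θ * q θ) (Ioi 0))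
    (hq₂ : IntegrableOn (fun θ => θ ^ 2 * q θ) (Ioi 0)) {k : ℕ} (hk : k ≤ 2) (A : Set ℝ) :
    IntegrableOn (fun s => s ^ k * mixdens μ γ σ q s) A := by
  refine integrableOn_mul_mixdens_of_integrable_prod (integrable_mul_jointDens_of_le_one_add_sq
    (g := fun s => s ^ k) hσ (measurable_id.pow_const k) (fun s => ?_) hq₀ hq₁ hq₂)
  interval_cases k
  · simpa using sq_nonneg s
  · simpa using abs_le_one_add_sq s
  · simp

lemma setIntegral_Ioi_mul_mixdens (hσ : 0 < σ) (hq₀ : IntegrableOn q (Ioi 0))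
    (hq₁ : IntegrableOn (fun θ => θ * q θ) (Ioi 0))
    (hq₂ : IntegrableOn (fun θ => θ ^ 2 * q θ) (Ioi 0)) (c : ℝ) :
    ∫ s in Ioi c, s * mixdens μ γ σ q s
      = μ * surv μ γ σ q c + γ * surv μ γ σ (fun θ => θ * q θ) c
        + σ ^ 2 * mixdens μ γ σ (fun θ => θ * q θ) c := by
  rw [setIntegral_mul_mixdens_of_integrable_prod (integrable_mul_jointDens_of_le_one_add_sq
      (g := fun s => s) hσ measurable_id abs_le_one_add_sq hq₀ hq₁ hq₂),
    surv_eq_setIntegral_tail_mul hσ hq₀, surv_eq_setIntegral_tail_mul hσ hq₁]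
  have hsplit : ∀ θ ∈ Ioi (0 : ℝ), (∫ s in Ioi c, s * ndens (μ + θ * γ) (θ * σ ^ 2) s) * q θ
      = μ * ((∫ s in Ioi c, ndens (μ + θ * γ) (θ * σ ^ 2) s) * q θ)
        + γ * ((∫ s in Ioi c, ndens (μ + θ * γ) (θ * σ ^ 2) s) * (θ * q θ))
        + σ ^ 2 * (ndens (μ + θ * γ) (θ * σ ^ 2) c * (θ * q θ)) := fun θ (hθ : 0 < θ) => by
    rw [setIntegral_Ioi_mul_ndens (by positivity)]
    ring
  have i₁ := (integrableOn_tail_mul (μ := μ) (γ := γ) hσ hq₀ c).const_mul μ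
  have i₂ := (integrableOn_tail_mul (μ := μ) (γ := γ) hσ hq₁ c).const_mul γ
  have i₃ := (integrableOn_ndens_mul_mul (μ := μ) (γ := γ) hσ hq₀ hq₁ c).const_mul (σ ^ 2)
  rw [setIntegral_congr_fun measurableSet_Ioi hsplit, integral_add, integral_add]
  · simp only [integral_const_mul]
    rfl
  exacts [i₁, i₂, i₁.add i₂, i₃]

lemma setIntegral_Ioi_sq_mul_mixdens (hσ : 0 < σ) (hq₀ : IntegrableOn q (Ioi 0))
    (hq₁ : IntegrableOn (fun θ => θ * q θ) (Ioi 0))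
    (hq₂ : IntegrableOn (fun θ => θ ^ 2 * q θ) (Ioi 0)) (c : ℝ) :
    ∫ s in Ioi c, s ^ 2 * mixdens μ γ σ q s
      = μ ^ 2 * surv μ γ σ q c + (2 * μ * γ + σ ^ 2) * surv μ γ σ (fun θ => θ * q θ) c
        + γ ^ 2 * surv μ γ σ (fun θ => θ ^ 2 * q θ) c
        + (μ + c) * σ ^ 2 * mixdens μ γ σ (fun θ => θ * q θ) c
        + γ * σ ^ 2 * mixdens μ γ σ (fun θ => θ ^ 2 * q θ) c := by
  rw [setIntegral_mul_mixdens_of_integrable_prod (integrable_mul_jointDens_of_le_one_add_sq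
      (g := fun s => s ^ 2) hσ (measurable_id.pow_const 2) (fun s => by simp) hq₀ hq₁ hq₂),
    surv_eq_setIntegral_tail_mul hσ hq₀, surv_eq_setIntegral_tail_mul hσ hq₁,
    surv_eq_setIntegral_tail_mul hσ hq₂]
  have hsplit : ∀ θ ∈ Ioi (0 : ℝ), (∫ s in Ioi c, s ^ 2 * ndens (μ + θ * γ) (θ * σ ^ 2) s) * q θ
      = μ ^ 2 * ((∫ s in Ioi c, ndens (μ + θ * γ) (θ * σ ^ 2) s) * q θ)
        + (2 * μ * γ + σ ^ 2) * ((∫ s in Ioi c, ndens (μ + θ * γ) (θ * σ ^ 2) s) * (θ * q θ))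
        + γ ^ 2 * ((∫ s in Ioi c, ndens (μ + θ * γ) (θ * σ ^ 2) s) * (θ ^ 2 * q θ))
        + (μ + c) * σ ^ 2 * (ndens (μ + θ * γ) (θ * σ ^ 2) c * (θ * q θ))
        + γ * σ ^ 2 * (ndens (μ + θ * γ) (θ * σ ^ 2) c * (θ ^ 2 * q θ)) :=
      fun θ (hθ : 0 < θ) => by
    rw [setIntegral_Ioi_sq_mul_ndens (by positivity)]
    ring
  have i₁ := (integrableOn_tail_mul (μ := μ) (γ := γ) hσ hq₀ c).const_mul (μ ^ 2)
  have i₂ := (integrableOn_tail_mul (μ := μ) (γ := γ) hσ hq₁ c).const_mul (2 * μ * γ + σ ^ 2)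
  have i₃ := (integrableOn_tail_mul (μ := μ) (γ := γ) hσ hq₂ c).const_mul (γ ^ 2)
  have i₄ :=
    (integrableOn_ndens_mul_mul (μ := μ) (γ := γ) hσ hq₀ hq₁ c).const_mul ((μ + c) * σ ^ 2)
  have i₅ : IntegrableOn
      (fun θ => γ * σ ^ 2 * (ndens (μ + θ * γ) (θ * σ ^ 2) c * (θ ^ 2 * q θ))) (Ioi 0) :=
    ((integrableOn_ndens_mul_mul hσ hq₁ (hq₂.congr_fun (fun θ _ => by ring) measurableSet_Ioi)
      c).const_mul (γ * σ ^ 2)).congr (ae_of_all _ fun θ => by ring)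
  rw [setIntegral_congr_fun measurableSet_Ioi hsplit, integral_add, integral_add, integral_add,
    integral_add]
  · simp only [integral_const_mul]
    rfl
  exacts [i₁, i₂, i₁.add i₂, i₃, (i₁.add i₂).add i₃, i₄, ((i₁.add i₂).add i₃).add i₄, i₅]

end Mixture

theorem nmvm_tail_variance_general
    (μ γ σ α sα : ℝ) (hσ : 0 < σ) (p : ℝ → ℝ)
    (hp1 : ∫ θ in Set.Ioi (0:ℝ), p θ = 1)
    (cstar : ℝ) (hcstar : cstar = ∫ θ in Set.Ioi (0:ℝ), θ * p θ) (hcpos : 0 < cstar)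
    (css : ℝ) (hcss : css = ∫ θ in Set.Ioi (0:ℝ), θ ^ 2 * p θ) (hcsspos : 0 < css)
    (pstar : ℝ → ℝ) (hpstar : pstar = fun θ => θ * p θ / cstar)
    (pss : ℝ → ℝ) (hpss : pss = fun θ => θ ^ 2 * p θ / css)
    (hα01 : α ∈ Set.Ioo (0:ℝ) 1)
    (hquant : surv μ γ σ p sα = 1 - α)
    (αstar : ℝ) (hαstar : αstar = 1 - surv μ γ σ pstar sα)
    (αss : ℝ) (hαss : αss = 1 - surv μ γ σ pss sα)
    (hspos : 0 < surv μ γ σ pstar sα) (hsspos : 0 < surv μ γ σ pss sα)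
    (CTE : ℝ) (hCTE : CTE = tailmom μ γ σ p 1 sα)
    (TV : ℝ)
    (hTV : TV = (surv μ γ σ p sα)⁻¹ *
        ∫ s in Set.Ioi sα, (s - CTE) ^ 2 * mixdens μ γ σ p s) :
    TV = cstar * (1 - αstar) / (1 - α) *
          (σ ^ 2 * (1 + (sα - μ) * (mixdens μ γ σ pstar sα / surv μ γ σ pstar sα)))
        + css * (1 - αss) / (1 - α) *
          (γ * (γ + σ ^ 2 * (mixdens μ γ σ pss sα / surv μ γ σ pss sα)))
        - (cstar * (1 - αstar) / (1 - α) *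
            (γ + σ ^ 2 * (mixdens μ γ σ pstar sα / surv μ γ σ pstar sα))) ^ 2 := by
  have hp₀ : IntegrableOn p (Ioi 0) := Integrable.of_integral_ne_zero (hp1 ▸ one_ne_zero)
  have hp₁ : IntegrableOn (fun θ => θ * p θ) (Ioi 0) :=
    Integrable.of_integral_ne_zero (hcstar ▸ hcpos.ne')
  have hp₂ : IntegrableOn (fun θ => θ ^ 2 * p θ) (Ioi 0) :=
    Integrable.of_integral_ne_zero (hcss ▸ hcsspos.ne')
  have hm₀ : IntegrableOn (mixdens μ γ σ p) (Ioi sα) := by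
    simpa using integrableOn_pow_mul_mixdens (k := 0) hσ hp₀ hp₁ hp₂ (by norm_num) (Ioi sα)
  have hm₁ : IntegrableOn (fun s => s * mixdens μ γ σ p s) (Ioi sα) := by
    simpa using integrableOn_pow_mul_mixdens (k := 1) hσ hp₀ hp₁ hp₂ (by norm_num) (Ioi sα)
  have hm₂ := integrableOn_pow_mul_mixdens (μ := μ) (γ := γ) hσ hp₀ hp₁ hp₂ le_rfl (Ioi sα)
  subst hpstar hpss hαstar hαss hTV hCTE
  simp only [surv_div_const, mixdens_div_const, sub_sub_cancel] at hspos hsspos ⊢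
  have hT₁ := (div_ne_zero_iff.1 hspos.ne').1
  have hT₂ := (div_ne_zero_iff.1 hsspos.ne').1
  have hα : 1 - α ≠ 0 := sub_ne_zero.2 hα01.2.ne'
  rw [integral_sub_sq_mul hm₀ hm₁ hm₂, show ∫ s in Ioi sα, mixdens μ γ σ p s = 1 - α from hquant]
  simp only [tailmom, pow_one, hquant, setIntegral_Ioi_mul_mixdens hσ hp₀ hp₁ hp₂,
    setIntegral_Ioi_sq_mul_mixdens hσ hp₀ hp₁ hp₂]
  field_simp
  ring

/-- tail variance of a univariate NMVM random variable. -/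
theorem nmvm_tail_variance
    (μ γ σ α sα : ℝ) (hσ : 0 < σ) (p : ℝ → ℝ)
    (hp0 : ∀ θ, 0 ≤ p θ) (hp1 : ∫ θ in Set.Ioi (0:ℝ), p θ = 1)
    (cstar : ℝ) (hcstar : cstar = ∫ θ in Set.Ioi (0:ℝ), θ * p θ) (hcpos : 0 < cstar)
    (css : ℝ) (hcss : css = ∫ θ in Set.Ioi (0:ℝ), θ ^ 2 * p θ) (hcsspos : 0 < css)
    (pstar : ℝ → ℝ) (hpstar : pstar = fun θ => θ * p θ / cstar)
    (pss : ℝ → ℝ) (hpss : pss = fun θ => θ ^ 2 * p θ / css)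
    (hα01 : α ∈ Set.Ioo (0:ℝ) 1)
    (hquant : surv μ γ σ p sα = 1 - α)
    (αstar : ℝ) (hαstar : αstar = 1 - surv μ γ σ pstar sα)
    (αss : ℝ) (hαss : αss = 1 - surv μ γ σ pss sα)
    (hspos : 0 < surv μ γ σ pstar sα) (hsspos : 0 < surv μ γ σ pss sα)
    (hintp : ∀ j ≤ 2, IntegrableOn (fun s => s ^ j * mixdens μ γ σ p s) (Set.Ioi sα))
    (CTE : ℝ) (hCTE : CTE = tailmom μ γ σ p 1 sα)
    (TV : ℝ)
    (hTV : TV = (surv μ γ σ p sα)⁻¹ *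
        ∫ s in Set.Ioi sα, (s - CTE) ^ 2 * mixdens μ γ σ p s) :
    TV = cstar * (1 - αstar) / (1 - α) *
          (σ ^ 2 * (1 + (sα - μ) * (mixdens μ γ σ pstar sα / surv μ γ σ pstar sα)))
        + css * (1 - αss) / (1 - α) *
          (γ * (γ + σ ^ 2 * (mixdens μ γ σ pss sα / surv μ γ σ pss sα)))
        - (cstar * (1 - αstar) / (1 - α) *
            (γ + σ ^ 2 * (mixdens μ γ σ pstar sα / surv μ γ σ pstar sα))) ^ 2 :=
  nmvm_tail_variance_general μ γ σ α sα hσ p hp1 cstar hcstar hcpos css hcss hcsspos pstar hpstar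
    pss hpss hα01 hquant αstar hαstar αss hαss hspos hsspos CTE hCTE TV hTV
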